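/- Let q be a prime power, d ≥ 1 an integer, and let E ⊆ F_q^d be a nonempty Sidon set. Then ‖Ê‖₄ ≤ 2·q^{−d}·√(#E), and more generally ‖Ê‖_p ≤ 2·q^{−d}·(#E)^{1−2/p} for every real p ≥ 4. (That is, every Sidon set is (p, 2/p)-Salem for all p ≥ 4, with explicit constant 2.) -/

import Mathlib

open Finset

/-- The Fourier transform of (the indicator of) a set `E ⊆ F_q^d`:
`Ê(x) = q^{-d} ∑_{y ∈ E} χ(-x·y)`. -/
noncomputable def fourierTransform {F : Type} [Field F] [Fintype F] [DecidableEq F] {d : ℕ}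
    (χ : AddChar F ℂ) (E : Finset (Fin d → F)) (x : Fin d → F) : ℂ :=
  ((Fintype.card F : ℂ) ^ d)⁻¹ * ∑ y ∈ E, χ (-(∑ i, x i * y i))

/-- `‖Ê‖_p = ( q^{-d} ∑_{x ≠ 0} |Ê(x)|^p )^{1/p}`. -/
noncomputable def lpNorm {F : Type} [Field F] [Fintype F] [DecidableEq F] {d : ℕ}
    (χ : AddChar F ℂ) (E : Finset (Fin d → F)) (p : ℝ) : ℝ :=
  (((Fintype.card F : ℝ) ^ d)⁻¹ *
      ∑ x ∈ Finset.univ.filter (fun x : Fin d → F => x ≠ 0),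
        ‖fourierTransform χ E x‖ ^ p) ^ (1 / p)

/-!
Write `Ê = q^{-d} S` with `S(x) = ∑_{y ∈ E} χ(-x·y)`. Expanding `|S|⁴ = (S S̄)²` and summing over
`x` with orthogonality of characters gives `∑_x |S(x)|⁴ = q^d E[E]`, where `E[E]` is the additive
energy, i.e. the number of solutions of `a + b = c + e` in `E`. For a Sidon set only the trivial
solutions remain, so `E[E] ≤ 2 (#E)²`. For `p ≥ 4` the surplus `p - 4` powers are bounded with
the trivial estimate `|Ê| ≤ q^{-d} #E`, and taking `p`-th roots costs a factor `2^{1/p} ≤ 2`.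
-/

lemma AddChar.map_sum_eq_prod {ι A M : Type*} [AddCommMonoid A] [CommMonoid M]
    (ψ : AddChar A M) (s : Finset ι) (f : ι → A) :
    ψ (∑ i ∈ s, f i) = ∏ i ∈ s, ψ (f i) := by
  classical
  induction s using Finset.induction_on with
  | empty => simp
  | insert a s ha ih => rw [sum_insert ha, prod_insert ha, map_add_eq_mul, ih]

lemma AddChar.sum_apply_dotProduct {R R' ι : Type*} [CommRing R] [Fintype R] [DecidableEq R]
    [CommRing R'] [IsDomain R'] [Fintype ι] [DecidableEq ι] {ψ : AddChar R R'}
    (hψ : ψ.IsPrimitive) (v : ι → R) :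
    ∑ x : ι → R, ψ (x ⬝ᵥ v) = if v = 0 then (Fintype.card R : R') ^ Fintype.card ι else 0 := by
  simp_rw [dotProduct, ψ.map_sum_eq_prod]
  rw [← Fintype.prod_sum (fun i t => ψ (t * v i))]
  simp_rw [AddChar.sum_mulShift _ hψ, Nat.cast_ite, Nat.cast_zero, Fintype.prod_ite_zero,
    prod_const, card_univ, funext_iff, Pi.zero_apply]

open scoped ComplexConjugate

namespace Finset

def IsSidon {α : Type*} [Add α] (s : Finset α) : Prop :=
  ∀ a ∈ s, ∀ b ∈ s, ∀ c ∈ s, ∀ e ∈ s, a + b = c + e → (a = c ∧ b = e) ∨ (a = e ∧ b = c)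

lemma IsSidon.addEnergy_le {α : Type*} [Add α] [DecidableEq α] {s : Finset α} (hs : s.IsSidon) :
    addEnergy s s ≤ 2 * #s ^ 2 := by
  have hsub : {x ∈ (s ×ˢ s) ×ˢ s ×ˢ s | x.1.1 + x.2.1 = x.1.2 + x.2.2} ⊆
      (s ×ˢ s).image (fun p ↦ ((p.1, p.1), (p.2, p.2))) ∪
        (s ×ˢ s).image (fun p ↦ ((p.1, p.2), (p.2, p.1))) := by
    rintro ⟨⟨a₁, a₂⟩, b₁, b₂⟩ hx
    simp only [mem_filter, mem_product] at hx
    obtain ⟨⟨⟨ha₁, ha₂⟩, hb₁, hb₂⟩, hsum⟩ := hx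
    rcases hs a₁ ha₁ b₁ hb₁ a₂ ha₂ b₂ hb₂ hsum with ⟨rfl, rfl⟩ | ⟨rfl, rfl⟩
    · exact mem_union_left _ (mem_image.2 ⟨(a₁, b₁), mem_product.2 ⟨ha₁, hb₁⟩, rfl⟩)
    · exact mem_union_right _ (mem_image.2 ⟨(a₁, b₁), mem_product.2 ⟨ha₁, hb₁⟩, rfl⟩)
  calc addEnergy s s ≤ #(s ×ˢ s) + #(s ×ˢ s) :=
        (card_le_card hsub).trans <| (card_union_le _ _).trans <|
          add_le_add card_image_le card_image_le
    _ = 2 * #s ^ 2 := by rw [card_product]; ring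

lemma sum_rpow_le_rpow_sub_mul_sum_pow {ι : Type*} (s : Finset ι) {f : ι → ℝ} {B p : ℝ}
    {n : ℕ} (hf₀ : ∀ i ∈ s, 0 ≤ f i) (hfB : ∀ i ∈ s, f i ≤ B) (hnp : n ≤ p) (hp : p ≠ 0) :
    ∑ i ∈ s, f i ^ p ≤ B ^ (p - n) * ∑ i ∈ s, f i ^ n := by
  rw [mul_sum]
  refine sum_le_sum fun i hi ↦ ?_
  calc f i ^ p = f i ^ (p - n) * f i ^ n := by
        rw [← Real.rpow_add_natCast' (hf₀ i hi) (by rwa [sub_add_cancel]), sub_add_cancel]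
    _ ≤ B ^ (p - n) * f i ^ n :=
        mul_le_mul_of_nonneg_right (Real.rpow_le_rpow (hf₀ i hi) (hfB i hi) (sub_nonneg.2 hnp))
          (pow_nonneg (hf₀ i hi) n)

end Finset

lemma Real.mul_rpow_rpow_one_div_le {c y p : ℝ} (hc : 1 ≤ c) (hy : 0 ≤ y) (hp : 1 ≤ p) :
    (c * y ^ p) ^ (1 / p) ≤ c * y := by
  have hp₀ : p ≠ 0 := by positivity
  rw [Real.mul_rpow (by positivity) (by positivity), ← Real.rpow_mul hy, mul_one_div_cancel hp₀,
    Real.rpow_one]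
  gcongr
  calc c ^ (1 / p) ≤ c ^ (1 : ℝ) :=
        Real.rpow_le_rpow_of_exponent_le hc ((div_le_one (by positivity)).2 hp)
    _ = c := Real.rpow_one c

section FourierTransform

variable {F : Type} [Field F] [Fintype F] [DecidableEq F] {d : ℕ} (χ : AddChar F ℂ)
  (E : Finset (Fin d → F))

lemma norm_fourierTransform_le (x : Fin d → F) :
    ‖fourierTransform χ E x‖ ≤ ((Fintype.card F : ℝ) ^ d)⁻¹ * #E := by
  rw [fourierTransform, norm_mul, norm_inv, norm_pow, Complex.norm_natCast]
  gcongr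
  exact (norm_sum_le _ _).trans_eq (by simp [AddChar.norm_apply])

lemma fourierTransform_mul_conj (x : Fin d → F) :
    fourierTransform χ E x * conj (fourierTransform χ E x) =
      ((Fintype.card F : ℂ) ^ d)⁻¹ ^ 2 * ∑ p ∈ E ×ˢ E, χ (x ⬝ᵥ (p.2 - p.1)) := by
  simp only [fourierTransform, map_mul, map_inv₀, map_pow, map_natCast, map_sum,
    ← AddChar.map_neg_eq_conj, neg_neg]
  rw [mul_mul_mul_comm, ← sq, sum_mul_sum, ← sum_product']
  congr 1
  refine sum_congr rfl fun p _ ↦ ?_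
  rw [← AddChar.map_add_eq_mul, dotProduct_sub]
  congr 1
  change -(x ⬝ᵥ p.1) + x ⬝ᵥ p.2 = _
  ring

lemma sum_norm_fourierTransform_pow_four (hχ : χ ≠ 1) :
    ∑ x, ‖fourierTransform χ E x‖ ^ 4 =
      ((Fintype.card F : ℝ) ^ d)⁻¹ ^ 3 * addEnergy E E := by
  apply Complex.ofReal_injective
  push_cast
  set Q : ℂ := (Fintype.card F : ℂ) ^ d
  have hQ : Q ≠ 0 := pow_ne_zero _ (Nat.cast_ne_zero.2 Fintype.card_ne_zero)
  calc ∑ x, (‖fourierTransform χ E x‖ : ℂ) ^ 4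
      = ∑ x, (Q⁻¹ ^ 2) ^ 2 * ∑ z ∈ (E ×ˢ E) ×ˢ E ×ˢ E,
          χ (x ⬝ᵥ (z.1.2 - z.1.1 + (z.2.2 - z.2.1))) := by
        refine sum_congr rfl fun x _ ↦ ?_
        rw [show (4 : ℕ) = 2 * 2 from rfl, pow_mul, ← Complex.conj_mul', mul_comm (conj _),
          fourierTransform_mul_conj, mul_pow, sq (∑ p ∈ E ×ˢ E, _), sum_mul_sum, ← sum_product']
        simp only [← AddChar.map_add_eq_mul, dotProduct_add]
        rfl
    _ = Q⁻¹ ^ 4 * ∑ z ∈ (E ×ˢ E) ×ˢ E ×ˢ E,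
          if z.1.2 - z.1.1 + (z.2.2 - z.2.1) = 0 then Q else 0 := by
        rw [← mul_sum, sum_comm, ← pow_mul]
        simp_rw [AddChar.sum_apply_dotProduct (AddChar.IsPrimitive.of_ne_one hχ), Fintype.card_fin]
        rfl
    _ = Q⁻¹ ^ 3 * addEnergy E E := by
        rw [addEnergy, natCast_card_filter, mul_sum, mul_sum]
        refine sum_congr rfl fun z _ ↦ ?_
        simp only [sub_add_sub_comm, sub_eq_zero, eq_comm (a := z.1.2 + z.2.2)]
        split_ifs
        · field_simp
        · simp

lemma sum_norm_fourierTransform_rpow_le_of_isSidon (hχ : χ ≠ 1) (hE : E.IsSidon) {p : ℝ}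
    (hp : 4 ≤ p) :
    ((Fintype.card F : ℝ) ^ d)⁻¹ *
        ∑ x ∈ univ.filter (fun x : Fin d → F => x ≠ 0), ‖fourierTransform χ E x‖ ^ p ≤
      2 * (((Fintype.card F : ℝ) ^ d)⁻¹ * (#E : ℝ) ^ (1 - 2 / p)) ^ p := by
  set u : ℝ := ((Fintype.card F : ℝ) ^ d)⁻¹
  set M : ℝ := ((#E : ℕ) : ℝ)
  have hu : 0 < u := by positivity
  have hM : 0 ≤ M := by positivity
  have hp₀ : p ≠ 0 := by positivity
  calc u * ∑ x ∈ univ.filter (fun x : Fin d → F => x ≠ 0), ‖fourierTransform χ E x‖ ^ p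
      ≤ u * ((u * M) ^ (p - 4) *
          ∑ x ∈ univ.filter (fun x : Fin d → F => x ≠ 0), ‖fourierTransform χ E x‖ ^ 4) := by
        gcongr
        simpa only [Nat.cast_ofNat] using sum_rpow_le_rpow_sub_mul_sum_pow (n := 4) _
          (fun x _ ↦ norm_nonneg _) (fun x _ ↦ norm_fourierTransform_le χ E x) (by simpa) hp₀
    _ ≤ u * ((u * M) ^ (p - 4) * ∑ x, ‖fourierTransform χ E x‖ ^ 4) := by
        gcongr
        exact subset_univ _
    _ ≤ u * ((u * M) ^ (p - 4) * (u ^ 3 * (2 * M ^ 2))) := by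
        rw [sum_norm_fourierTransform_pow_four χ E hχ]
        gcongr
        simp only [M]
        exact_mod_cast hE.addEnergy_le
    _ = 2 * (u * M ^ (1 - 2 / p)) ^ p := by
        have hexp : (1 - 2 / p) * p = (p - 4) + (2 : ℕ) := by
          push_cast
          field_simp
          ring
        have hu4 : u ^ p = u ^ (p - 4) * u ^ 4 := by
          rw [← Real.rpow_add_natCast' hu.le (by push_cast; linarith)]
          norm_num
        rw [Real.mul_rpow hu.le hM, Real.mul_rpow hu.le (by positivity), ← Real.rpow_mul hM, hexp,
          Real.rpow_add_natCast' hM (by push_cast; linarith), hu4]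
        ring

lemma lpNorm_le_of_isSidon (hχ : χ ≠ 1) (hE : E.IsSidon) {p : ℝ} (hp : 4 ≤ p) :
    lpNorm χ E p ≤ 2 * ((Fintype.card F : ℝ) ^ d)⁻¹ * (#E : ℝ) ^ (1 - 2 / p) := by
  calc lpNorm χ E p
      ≤ (2 * (((Fintype.card F : ℝ) ^ d)⁻¹ * (#E : ℝ) ^ (1 - 2 / p)) ^ p) ^ (1 / p) :=
        Real.rpow_le_rpow (by positivity)
          (sum_norm_fourierTransform_rpow_le_of_isSidon χ E hχ hE hp) (by positivity)
    _ ≤ 2 * (((Fintype.card F : ℝ) ^ d)⁻¹ * (#E : ℝ) ^ (1 - 2 / p)) :=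
        Real.mul_rpow_rpow_one_div_le one_le_two (by positivity) (by linarith)
    _ = 2 * ((Fintype.card F : ℝ) ^ d)⁻¹ * (#E : ℝ) ^ (1 - 2 / p) := by ring

end FourierTransform

theorem sidon_lp_bound_general {F : Type} [Field F] [Fintype F] [DecidableEq F] {d : ℕ}
    (χ : AddChar F ℂ) (hχ : ∃ a, χ a ≠ 1)
    (E : Finset (Fin d → F))
    (hSidon : ∀ a ∈ E, ∀ b ∈ E, ∀ c ∈ E, ∀ e ∈ E,
      a + b = c + e → (a = c ∧ b = e) ∨ (a = e ∧ b = c)) :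
    lpNorm χ E 4 ≤ 2 * ((Fintype.card F : ℝ) ^ d)⁻¹ * Real.sqrt (E.card : ℝ) ∧
      ∀ p : ℝ, 4 ≤ p →
        lpNorm χ E p ≤ 2 * ((Fintype.card F : ℝ) ^ d)⁻¹ * (E.card : ℝ) ^ (1 - 2 / p) := by
  have hχ₁ : χ ≠ 1 := AddChar.ne_one_iff.2 hχ
  refine ⟨?_, fun p hp ↦ lpNorm_le_of_isSidon χ E hχ₁ hSidon hp⟩
  rw [Real.sqrt_eq_rpow, show (1 / 2 : ℝ) = 1 - 2 / 4 by norm_num]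
  exact lpNorm_le_of_isSidon χ E hχ₁ hSidon le_rfl

/-- Every nonempty Sidon set `E ⊆ F_q^d` satisfies `‖Ê‖₄ ≤ 2 q^{-d} √(#E)` and, more
generally, `‖Ê‖_p ≤ 2 q^{-d} (#E)^{1-2/p}` for every real `p ≥ 4`. -/
theorem sidon_lp_bound {F : Type} [Field F] [Fintype F] [DecidableEq F] {d : ℕ}
    (hd : 1 ≤ d) (χ : AddChar F ℂ) (hχ : ∃ a, χ a ≠ 1)
    (E : Finset (Fin d → F)) (hE : E.Nonempty)
    (hSidon : ∀ a ∈ E, ∀ b ∈ E, ∀ c ∈ E, ∀ e ∈ E,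
      a + b = c + e → (a = c ∧ b = e) ∨ (a = e ∧ b = c)) :
    lpNorm χ E 4 ≤ 2 * ((Fintype.card F : ℝ) ^ d)⁻¹ * Real.sqrt (E.card : ℝ) ∧
      ∀ p : ℝ, 4 ≤ p →
        lpNorm χ E p ≤ 2 * ((Fintype.card F : ℝ) ^ d)⁻¹ * (E.card : ℝ) ^ (1 - 2 / p) :=
  sidon_lp_bound_general χ hχ E hSidon
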